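/- arXiv:2504.14265 — 8 statements merged into one kernel-verified Lean document; each statement's English description precedes it below -/
import Mathlib

section
/- For every natural number n ≥ 19 and every real α > 0, α·(3(2^{n-2}−33)^{1.2} + 2(2^{n-3}−33)^{1.2} + 4(2^{n-4}−33)^{1.2} + 8(2^{n-5}−33)^{1.2}) > α·(2^n − 33)^{1.2}. -/
set_option maxHeartbeats 1000000

private lemma pow2_rpow02 (k : ℕ) :
    ((2:ℝ) ^ k) ^ (0.2:ℝ) = ((2:ℝ) ^ (0.2:ℝ)) ^ k := by
  rw [← Real.rpow_natCast 2 k, ← Real.rpow_mul (by norm_num), mul_comm,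
      Real.rpow_mul (by norm_num), Real.rpow_natCast]

private lemma rpow_split (a : ℝ) (ha : 0 < a) :
    a ^ (1.2:ℝ) = a * a ^ (0.2:ℝ) := by
  rw [show (1.2:ℝ) = 1 + 0.2 by norm_num, Real.rpow_add ha, Real.rpow_one]

/-- Tangent-line (Bernoulli) bound: `(a-33)^{1.2} ≥ a^{1.2} - 39.6 a^{0.2}`. -/
private lemma bern_aux (a : ℝ) (ha : 33 ≤ a) :
    a ^ (1.2:ℝ) - 39.6 * a ^ (0.2:ℝ) ≤ (a - 33) ^ (1.2:ℝ) := by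
  have ha0 : (0:ℝ) < a := by linarith
  have hda : (33:ℝ) / a ≤ 1 := (div_le_one ha0).mpr ha
  have hs : (-1:ℝ) ≤ -33 / a := by rw [neg_div]; linarith
  have h1 : (0:ℝ) ≤ 1 + -33 / a := by rw [neg_div]; linarith
  have hb := one_add_mul_self_le_rpow_one_add hs (p := (1.2:ℝ)) (by norm_num)
  have hkey : a - 33 = a * (1 + -33 / a) := by field_simp; ring
  rw [hkey, Real.mul_rpow ha0.le h1]
  have h2 : a ^ (1.2:ℝ) * (1 + 1.2 * (-33 / a)) ≤ a ^ (1.2:ℝ) * (1 + -33/a) ^ (1.2:ℝ) :=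
    mul_le_mul_of_nonneg_left hb (Real.rpow_nonneg ha0.le _)
  have h3 : a ^ (1.2:ℝ) * (1 + 1.2 * (-33 / a)) = a ^ (1.2:ℝ) - 39.6 * a ^ (0.2:ℝ) := by
    rw [rpow_split a ha0]; field_simp; ring
  linarith

/-- For `n ≥ 19` and `α > 0`,
`α(3(2^{n-2}-33)^{1.2} + 2(2^{n-3}-33)^{1.2} + 4(2^{n-4}-33)^{1.2} + 8(2^{n-5}-33)^{1.2})
  > α(2^n-33)^{1.2}`. -/
theorem stmt3 (n : ℕ) (hn : 19 ≤ n) (α : ℝ) (hα : 0 < α) :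
    α * (3 * ((2 : ℝ) ^ (n - 2) - 33) ^ (1.2 : ℝ)
        + 2 * ((2 : ℝ) ^ (n - 3) - 33) ^ (1.2 : ℝ)
        + 4 * ((2 : ℝ) ^ (n - 4) - 33) ^ (1.2 : ℝ)
        + 8 * ((2 : ℝ) ^ (n - 5) - 33) ^ (1.2 : ℝ))
      > α * ((2 : ℝ) ^ n - 33) ^ (1.2 : ℝ) := by
  obtain ⟨m, rfl⟩ : ∃ m, n = m + 5 := ⟨n - 5, by omega⟩
  have hm : 14 ≤ m := by omega
  set x : ℝ := 2 ^ m with hxdef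
  have hxpos : (0:ℝ) < x := by positivity
  have hx : (16384:ℝ) ≤ x := by
    calc (16384:ℝ) = 2 ^ 14 := by norm_num
    _ ≤ 2 ^ m := pow_le_pow_right₀ (by norm_num) hm
  have e2 : (2:ℝ) ^ (m + 5 - 2) = 8 * x := by
    rw [show m + 5 - 2 = m + 3 from by omega, pow_add]; ring
  have e3 : (2:ℝ) ^ (m + 5 - 3) = 4 * x := by
    rw [show m + 5 - 3 = m + 2 from by omega, pow_add]; ring
  have e4 : (2:ℝ) ^ (m + 5 - 4) = 2 * x := by
    rw [show m + 5 - 4 = m + 1 from by omega, pow_add]; ring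
  have e5 : (2:ℝ) ^ (m + 5 - 5) = x := by
    rw [show m + 5 - 5 = m from by omega]
  have e0 : (2:ℝ) ^ (m + 5) = 32 * x := by rw [pow_add]; ring
  rw [e2, e3, e4, e5, e0]
  set c : ℝ := (2:ℝ) ^ (0.2:ℝ) with hcdef
  have hcpos : (0:ℝ) < c := Real.rpow_pos_of_pos two_pos _
  have hc5 : c ^ 5 = 2 := by
    rw [hcdef, ← Real.rpow_natCast ((2:ℝ) ^ (0.2:ℝ)) 5,
        ← Real.rpow_mul (by norm_num)]
    norm_num
  have hclb : (1.1486:ℝ) ≤ c := by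
    by_contra h
    push_neg at h
    have : c ^ 5 < (1.1486:ℝ) ^ 5 := pow_lt_pow_left₀ h hcpos.le (by norm_num)
    rw [hc5] at this; norm_num at this
  have hcub : c ≤ (1.149:ℝ) := by
    by_contra h
    push_neg at h
    have : (1.149:ℝ) ^ 5 < c ^ 5 := pow_lt_pow_left₀ h (by norm_num) (by norm_num)
    rw [hc5] at this; norm_num at this
  set u : ℝ := x ^ (0.2:ℝ) with hudef
  have hupos : (0:ℝ) < u := Real.rpow_pos_of_pos hxpos _
  have hxu : x ^ (1.2:ℝ) = x * u := rpow_split x hxpos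
  have key : ∀ k : ℕ, ((2:ℝ) ^ k * x) ^ (1.2:ℝ) = 2 ^ k * c ^ k * (x * u) ∧
      ((2:ℝ) ^ k * x) ^ (0.2:ℝ) = c ^ k * u := by
    intro k
    have hk : (0:ℝ) < (2:ℝ) ^ k := by positivity
    constructor
    · rw [Real.mul_rpow hk.le hxpos.le, rpow_split _ hk, pow2_rpow02 k, hxu, ← hcdef]
    · rw [Real.mul_rpow hk.le hxpos.le, pow2_rpow02 k]
  have b8 : 8 * c ^ 3 * (x * u) - 39.6 * (c ^ 3 * u) ≤ (8 * x - 33) ^ (1.2:ℝ) := by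
    have h := bern_aux (8 * x) (by linarith)
    have h1 : ((8:ℝ) * x) ^ (1.2:ℝ) = 8 * c ^ 3 * (x * u) := by
      rw [show (8:ℝ) * x = 2 ^ 3 * x from by norm_num, (key 3).1]; norm_num
    have h2 : ((8:ℝ) * x) ^ (0.2:ℝ) = c ^ 3 * u := by
      rw [show (8:ℝ) * x = 2 ^ 3 * x from by norm_num, (key 3).2]
    rw [h1, h2] at h; exact h
  have b4 : 4 * c ^ 2 * (x * u) - 39.6 * (c ^ 2 * u) ≤ (4 * x - 33) ^ (1.2:ℝ) := by
    have h := bern_aux (4 * x) (by linarith)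
    have h1 : ((4:ℝ) * x) ^ (1.2:ℝ) = 4 * c ^ 2 * (x * u) := by
      rw [show (4:ℝ) * x = 2 ^ 2 * x from by norm_num, (key 2).1]; norm_num
    have h2 : ((4:ℝ) * x) ^ (0.2:ℝ) = c ^ 2 * u := by
      rw [show (4:ℝ) * x = 2 ^ 2 * x from by norm_num, (key 2).2]
    rw [h1, h2] at h; exact h
  have b2 : 2 * c * (x * u) - 39.6 * (c * u) ≤ (2 * x - 33) ^ (1.2:ℝ) := by
    have h := bern_aux (2 * x) (by linarith)
    have h1 : ((2:ℝ) * x) ^ (1.2:ℝ) = 2 * c * (x * u) := by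
      rw [show (2:ℝ) * x = 2 ^ 1 * x from by norm_num, (key 1).1]; norm_num
    have h2 : ((2:ℝ) * x) ^ (0.2:ℝ) = c * u := by
      rw [show (2:ℝ) * x = 2 ^ 1 * x from by norm_num, (key 1).2]; norm_num
    rw [h1, h2] at h; exact h
  have b1 : x * u - 39.6 * u ≤ (x - 33) ^ (1.2:ℝ) := by
    have h := bern_aux x (by linarith)
    rw [hxu, ← hudef] at h; exact h
  have hub : (32 * x - 33) ^ (1.2:ℝ) < 64 * (x * u) := by
    have h1 : ((32:ℝ) * x) ^ (1.2:ℝ) = 64 * (x * u) := by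
      rw [show (32:ℝ) * x = 2 ^ 5 * x from by norm_num, (key 5).1, hc5]; norm_num
    rw [← h1]
    exact Real.rpow_lt_rpow (by linarith) (by linarith) (by norm_num)
  have core : (64:ℝ) * (x * u)
      < 3 * (8 * c ^ 3 * (x * u) - 39.6 * (c ^ 3 * u))
        + 2 * (4 * c ^ 2 * (x * u) - 39.6 * (c ^ 2 * u))
        + 4 * (2 * c * (x * u) - 39.6 * (c * u))
        + 8 * (x * u - 39.6 * u) := by
    have hS : (0.12:ℝ) ≤ 24 * c ^ 3 + 8 * c ^ 2 + 8 * c - 56 := by nlinarith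
    have hT : 39.6 * (3 * c ^ 3 + 2 * c ^ 2 + 4 * c + 8) ≤ 784 := by nlinarith
    have hxS : (1784:ℝ) ≤ x * (24 * c ^ 3 + 8 * c ^ 2 + 8 * c - 56) := by
      calc (1784:ℝ) ≤ 16384 * 0.12 := by norm_num
      _ ≤ x * (24 * c ^ 3 + 8 * c ^ 2 + 8 * c - 56) := by
          apply mul_le_mul hx hS (by norm_num) (by linarith)
    nlinarith [mul_lt_mul_of_pos_right
      (show 39.6 * (3 * c ^ 3 + 2 * c ^ 2 + 4 * c + 8)
        < x * (24 * c ^ 3 + 8 * c ^ 2 + 8 * c - 56) from by linarith) hupos]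
  have main : (32 * x - 33) ^ (1.2:ℝ)
      < 3 * ((8 * x - 33) ^ (1.2:ℝ)) + 2 * ((4 * x - 33) ^ (1.2:ℝ))
        + 4 * ((2 * x - 33) ^ (1.2:ℝ)) + 8 * ((x - 33) ^ (1.2:ℝ)) := by
    linarith
  exact mul_lt_mul_of_pos_left main hα
end

section
/- Consider the one-dimensional pursuit game on ℤ where on each turn the robber moves a distance at most 2 and then the cop moves a distance at most 1. If the cop starts at c₀ ∈ ℤ, the robber starts at any r₀ ∈ ℤ and follows an arbitrary trajectory r₀, r₁, ..., r_T with |r_{j+1} − r_j| ≤ 2, and if |⌈(c₀ + r_T)/2⌉ − c₀| ≤ T, then the cop has a strategy (responding to the robber's moves) guaranteeing that the cop's position at time T equals ⌈(c₀ + r_T)/2⌉. -/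
/-- Midpoint lemma: in the 1-D pursuit game on ℤ (robber speed 2, cop speed 1),
a cop starting at `c₀` has a strategy (a function of the robber history) such that,
against any robber trajectory `r` with `|⌈(c₀ + r T)/2⌉ - c₀| ≤ T`, the cop's
moves are legal (speed 1) and the cop's position at time `T` is `⌈(c₀ + r T)/2⌉`. -/
theorem stmt4 (c₀ : ℤ) (T : ℕ) :
    ∃ strat : List ℤ → ℤ,
      ∀ r : ℕ → ℤ, (∀ j, |r (j + 1) - r j| ≤ 2) →
        |(⌈((c₀ : ℚ) + r T) / 2⌉ : ℤ) - c₀| ≤ (T : ℤ) →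
        ∀ c : ℕ → ℤ, c 0 = c₀ →
          (∀ t, c (t + 1) = strat (List.ofFn fun j : Fin (t + 2) => r j)) →
          (∀ t, |c (t + 1) - c t| ≤ 1) ∧ c T = ⌈((c₀ : ℚ) + r T) / 2⌉ := by
  refine ⟨fun l => max (c₀ - ((l.length : ℤ) - 1))
      (min (c₀ + ((l.length : ℤ) - 1)) ⌈((c₀ : ℚ) + (l.getD (l.length - 1) 0)) / 2⌉), ?_⟩
  intro r hr hT c hc0 hc
  set M : ℕ → ℤ := fun t => ⌈((c₀ : ℚ) + r t) / 2⌉ with hM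
  have hMlip : ∀ t, |M (t + 1) - M t| ≤ 1 := by
    intro t
    have h := hr t
    rw [abs_le] at h ⊢
    have h1 : ((c₀ : ℚ) + r (t + 1)) / 2 ≤ ((c₀ : ℚ) + r t) / 2 + 1 := by
      have : (r (t + 1) : ℚ) ≤ (r t : ℚ) + 2 := by exact_mod_cast (by omega : r (t+1) ≤ r t + 2)
      linarith
    have h2 : ((c₀ : ℚ) + r t) / 2 + (-1 : ℤ) ≤ ((c₀ : ℚ) + r (t + 1)) / 2 := by
      have : (r t : ℚ) - 2 ≤ (r (t + 1) : ℚ) := by exact_mod_cast (by omega : r t - 2 ≤ r (t+1))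
      push_cast
      linarith
    constructor
    · have := Int.ceil_mono h2
      rw [Int.ceil_add_intCast] at this
      simp only [hM]
      omega
    · have := Int.ceil_mono h1
      have e : ((c₀ : ℚ) + r t) / 2 + 1 = ((c₀ : ℚ) + r t) / 2 + (1 : ℤ) := by push_cast; ring
      rw [e, Int.ceil_add_intCast] at this
      simp only [hM]
      omega
  have hclamp : ∀ t, c t = max (c₀ - t) (min (c₀ + t) (M t)) := by
    intro t
    cases t with
    | zero =>
      simp only [hc0, Nat.cast_zero]
      omega
    | succ t =>
      rw [hc t]
      have hlen : (List.ofFn fun j : Fin (t + 2) => r j).length = t + 2 :=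
        List.length_ofFn
      have hget : (List.ofFn fun j : Fin (t + 2) => r j).getD (t + 2 - 1) 0
          = r (t + 1) := by
        rw [List.getD_eq_getElem _ _ (by rw [hlen]; omega)]
        rw [List.getElem_ofFn]
        norm_num
      simp only [hget, hlen, hM]
      have e : (((t + 2 : ℕ) : ℤ)) - 1 = ((t + 1 : ℕ) : ℤ) := by push_cast; ring
      rw [e]
  constructor
  · intro t
    have h0 := hclamp t
    have h1 := hclamp (t + 1)
    have h2 := hMlip t
    push_cast at h0 h1
    rw [abs_le] at h2 ⊢
    omega
  · have h0 := hclamp T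
    rw [abs_le] at hT
    simp only [hM] at h0 ⊢
    omega
end

section
/- In the Covering game on the path [n] = {1,...,n}, where each cop moves a distance at most 1 per turn and the robber moves a distance at most 2 per turn (cops choose initial positions first, cops must occupy the robber's vertex after every cop turn), the minimum number of cops that can win is exactly ⌈n/2⌉. -/
/-- The cops (speed 1) win the Covering game against a speed-2 robber on the path
`[n] = {1,…,n}` with `k` cops: the cops choose initial positions and a strategy
(a function of the robber history), and against every legal robber trajectory the
induced cop trajectories are legal (speed 1, staying on the path) and after every
cop move some cop occupies the robber's vertex. -/
def CopsWinPath (n k : ℕ) : Prop :=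
  ∃ (init : Fin k → ℤ) (strat : Fin k → List ℤ → ℤ),
    (∀ i, init i ∈ Set.Icc (1 : ℤ) n) ∧
    ∀ r : ℕ → ℤ,
      (∀ t, r t ∈ Set.Icc (1 : ℤ) n) →
      (∀ t, |r (t + 1) - r t| ≤ 2) →
      ∀ c : Fin k → ℕ → ℤ,
        (∀ i t, c i t = strat i (List.ofFn fun j : Fin (t + 1) => r j)) →
        (∀ i, |c i 0 - init i| ≤ 1) ∧
        (∀ i t, |c i (t + 1) - c i t| ≤ 1) ∧
        (∀ i t, c i t ∈ Set.Icc (1 : ℤ) n) ∧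
        (∀ t, ∃ i, c i t = r t)

/-- last element of the history list -/
lemma last_ofFn (r : ℕ → ℤ) (t : ℕ) :
    (List.ofFn fun j : Fin (t + 1) => r j).getLastD 0 = r t := by
  have h : (List.ofFn fun j : Fin (t + 1) => r j) ≠ [] := by
    simp [List.ofFn_eq_nil_iff]
  rw [List.getLastD_eq_getLast?, List.getLast?_eq_getLast h, List.getLast_ofFn]
  simp

/-- cop position rule -/
noncomputable def pos (i x : ℤ) : ℤ := if x = 2*i+1 ∨ x = 2*i+2 then x else 2*i+1

lemma pos_eq (i x : ℤ) (h : x = 2*i+1 ∨ x = 2*i+2) : pos i x = x := if_pos h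

/-- cop displacement bound over time -/
lemma cop_travel (c : ℕ → ℤ) (h : ∀ t, |c (t + 1) - c t| ≤ 1) (s d : ℕ) :
    |c (s + d) - c s| ≤ d := by
  induction d with
  | zero => simp
  | succ d ih =>
    have h1 := h (s + d)
    calc |c (s + d + 1) - c s| ≤ |c (s + d + 1) - c (s + d)| + |c (s + d) - c s| := by
          have := abs_sub_le (c (s + d + 1)) (c (s + d)) (c s)
          simpa using this
      _ ≤ 1 + d := by exact add_le_add h1 ih
      _ = (d + 1 : ℕ) := by push_cast; ring

/-- The minimum number of cops needed to win Covering on the path `[n]` is `⌈n/2⌉`. -/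
theorem stmt5 (n : ℕ) (hn : 1 ≤ n) :
    IsLeast {k | CopsWinPath n k} ((n + 1) / 2) := by
  constructor
  · -- cops win with (n+1)/2 cops
    set k := (n + 1) / 2 with hk
    refine ⟨fun i => 2 * (i : ℤ) + 1, fun i h => pos (i : ℤ) (h.getLastD 0), ?_, ?_⟩
    · intro i
      have hi : (i : ℕ) < k := i.isLt
      have h1 : 2 * (i : ℕ) + 1 ≤ n := by omega
      have h2 : ((2 * (i : ℕ) + 1 : ℕ) : ℤ) ≤ (n : ℤ) := by exact_mod_cast h1
      simp only [Set.mem_Icc]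
      push_cast at h2 ⊢
      omega
    · intro r hrI hrS c hc
      have hc' : ∀ i t, c i t = pos (i : ℤ) (r t) := by
        intro i t
        rw [hc i t]
        exact congrArg (pos ((i : ℕ) : ℤ)) (last_ofFn r t)
      have hbound : ∀ (i : Fin k) t, c i t ∈ Set.Icc (1 : ℤ) n := by
        intro i t
        have hi : (i : ℕ) < k := i.isLt
        have h1 : 2 * (i : ℕ) + 1 ≤ n := by omega
        have hr := hrI t
        simp only [Set.mem_Icc] at hr ⊢
        rw [hc' i t]; unfold pos
        split_ifs with h
        · exact hr
        · have h2 : ((2 * (i : ℕ) + 1 : ℕ) : ℤ) ≤ (n : ℤ) := by exact_mod_cast h1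
          push_cast at h2 ⊢
          omega
      refine ⟨?_, ?_, hbound, ?_⟩
      · intro i
        show |c i 0 - (2 * ((i : ℕ) : ℤ) + 1)| ≤ 1
        rw [hc' i 0]; unfold pos
        split_ifs with h
        · rw [abs_le]; omega
        · simp
      · intro i t
        have hs := hrS t
        rw [abs_le] at hs
        rw [hc' i (t+1), hc' i t]; unfold pos
        split_ifs with h1 h2 h2 <;> rw [abs_le] <;> omega
      · intro t
        have hr := hrI t
        simp only [Set.mem_Icc] at hr
        set m := (r t).toNat with hm
        have hm1 : 1 ≤ m := by omega
        have hmn : m ≤ n := by omega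
        have hrm : r t = (m : ℤ) := by omega
        refine ⟨⟨(m - 1) / 2, by omega⟩, ?_⟩
        rw [hc' _ t]
        apply pos_eq
        simp only [Fin.val_mk]
        rw [hrm]
        omega
  · -- lower bound
    rintro k ⟨init, strat, hinit, hwin⟩

    set T := (n - 1) / 2 with hT
    -- robber: r t = 1 + 2 * min t T
    set r : ℕ → ℤ := fun t => 1 + 2 * (min t T : ℕ) with hr
    have hrI : ∀ t, r t ∈ Set.Icc (1 : ℤ) n := by
      intro t
      simp only [hr, Set.mem_Icc]
      have h2 : 2 * T + 1 ≤ n := by omega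
      omega
    have hrS : ∀ t, |r (t + 1) - r t| ≤ 2 := by
      intro t
      simp only [hr]
      rw [abs_le]
      omega
    set c : Fin k → ℕ → ℤ := fun i t => strat i (List.ofFn fun j : Fin (t + 1) => r j) with hcdef
    obtain ⟨h0, hstep, hIcc, hcover⟩ := hwin r hrI hrS c (fun i t => rfl)
    -- each time 0..T is covered by a distinct cop
    have key : ∀ s : Fin (T + 1), ∃ i : Fin k, c i s = r s := fun s => hcover s
    choose f hf using key
    have hinj : Function.Injective f := by
      have key2 : ∀ a b : Fin (T + 1), f a = f b → (a : ℕ) < (b : ℕ) → False := by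
        intro a b hab hlt
        have hca := hf a
        have hcb := hf b
        rw [hab] at hca
        have htr := cop_travel (c (f b)) (hstep (f b)) a ((b : ℕ) - a)
        have hba : (a : ℕ) + ((b : ℕ) - (a : ℕ)) = (b : ℕ) := by omega
        rw [hba] at htr
        rw [hca, hcb] at htr
        have hma : min (a : ℕ) T = (a : ℕ) := by have := a.isLt; omega
        have hmb : min (b : ℕ) T = (b : ℕ) := by have := b.isLt; omega
        simp only [hr, hma, hmb] at htr
        rw [abs_le] at htr
        have hc1 := htr.1
        have hc2 := htr.2
        push_cast at hc1 hc2
        omega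
      intro a b hab
      by_contra hne
      have hv : (a : ℕ) ≠ (b : ℕ) := fun h => hne (Fin.ext h)
      rcases lt_or_gt_of_ne hv with h | h
      · exact key2 a b hab h
      · exact key2 b a hab.symm h
    have := Fintype.card_le_of_injective f hinj
    simp at this
    omega
end

section
/- Let f(n) be the minimum number of cops needed to win the Covering game on the grid [n]² (ℓ∞ adjacency) and g(n) the minimum number needed on the torus [n]² (coordinates adjacent iff each differs by at most 1 modulo n). Then (1/4)·f(n) ≤ g(n) ≤ 4·f(n). -/
/-- A step of ℓ∞ length at most `s` in ℤ². -/
def stepZ (s : ℕ) (p q : ℤ × ℤ) : Prop := |q.1 - p.1| ≤ s ∧ |q.2 - p.2| ≤ s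

/-- Membership in the grid `[n]²`. -/
def inBox (n : ℕ) (p : ℤ × ℤ) : Prop :=
  p.1 ∈ Set.Icc (1 : ℤ) n ∧ p.2 ∈ Set.Icc (1 : ℤ) n

/-- `k` cops (speed 1) win the Covering game against a speed-2 robber on the grid
`[n]²` with ℓ∞ adjacency. -/
def CopsWinGrid (n k : ℕ) : Prop :=
  ∃ (init : Fin k → ℤ × ℤ) (strat : Fin k → List (ℤ × ℤ) → ℤ × ℤ),
    (∀ i, inBox n (init i)) ∧
    ∀ r : ℕ → ℤ × ℤ,
      (∀ t, inBox n (r t)) →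
      (∀ t, stepZ 2 (r t) (r (t + 1))) →
      ∀ c : Fin k → ℕ → ℤ × ℤ,
        (∀ i t, c i t = strat i (List.ofFn fun j : Fin (t + 1) => r j)) →
        (∀ i, stepZ 1 (init i) (c i 0)) ∧
        (∀ i t, stepZ 1 (c i t) (c i (t + 1))) ∧
        (∀ i t, inBox n (c i t)) ∧
        (∀ t, ∃ i, c i t = r t)

/-- A step of length at most `s` in each coordinate, modulo `n` (torus metric). -/
def torusStep (n s : ℕ) (p q : ZMod n × ZMod n) : Prop :=
  ∃ a b : ℤ, |a| ≤ s ∧ |b| ≤ s ∧ q.1 = p.1 + a ∧ q.2 = p.2 + b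

/-- `k` cops (speed 1) win the Covering game against a speed-2 robber on the torus `[n]²`. -/
def CopsWinTorus (n k : ℕ) : Prop :=
  ∃ (init : Fin k → ZMod n × ZMod n)
    (strat : Fin k → List (ZMod n × ZMod n) → ZMod n × ZMod n),
    ∀ r : ℕ → ZMod n × ZMod n,
      (∀ t, torusStep n 2 (r t) (r (t + 1))) →
      ∀ c : Fin k → ℕ → ZMod n × ZMod n,
        (∀ i t, c i t = strat i (List.ofFn fun j : Fin (t + 1) => r j)) →
        (∀ i, torusStep n 1 (init i) (c i 0)) ∧
        (∀ i t, torusStep n 1 (c i t) (c i (t + 1))) ∧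
        (∀ t, ∃ i, c i t = r t)

namespace Stmt7Aux

/-- `⌈n/3⌉`. -/
def mcnt (n : ℕ) : ℕ := (n + 2) / 3

/-- Grid home coordinate for index `a`. -/
def Hg (n a : ℕ) : ℤ := min (3 * (a : ℤ) + 2) (n : ℤ)

/-- Designated home index of a grid coordinate. -/
def idxg (x : ℤ) : ℕ := (x - 1).toNat / 3

lemma desig_g {n : ℕ} (hn : 1 ≤ n) {x : ℤ} (h1 : 1 ≤ x) (h2 : x ≤ (n : ℤ)) :
    idxg x < mcnt n ∧ -1 ≤ x - Hg n (idxg x) ∧ x - Hg n (idxg x) ≤ 1 := by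
  unfold idxg Hg mcnt
  omega

lemma Hg_box {n : ℕ} (hn : 1 ≤ n) (a : ℕ) : 1 ≤ Hg n a ∧ Hg n a ≤ (n : ℤ) := by
  unfold Hg; omega

def teamNat (b : Bool) : ℕ := if b then 1 else 0

lemma teamNat_mod (t : ℕ) : t % 2 = teamNat (decide (t % 2 = 1)) := by
  rcases Nat.mod_two_eq_zero_or_one t with h | h <;> simp [teamNat, h]

/-- Torus home coordinate for index `a` (0-indexed). -/
def HT (n a : ℕ) : ℕ := min (3 * a + 1) (n - 1)

/-- Designated home index of a torus coordinate. -/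
def idxT {n : ℕ} (p : ZMod n) : ℕ := p.val / 3

lemma desig_T {n : ℕ} (hn : 1 ≤ n) {u : ℕ} (hu : u < n) :
    u / 3 < mcnt n ∧ HT n (u / 3) ≤ u + 1 ∧ u ≤ HT n (u / 3) + 1 := by
  unfold HT mcnt
  omega

def gridEquiv (n : ℕ) : (Bool × (Fin (mcnt n) × Fin (mcnt n))) ≃ Fin (2 * (mcnt n * mcnt n)) :=
  (Equiv.prodCongr finTwoEquiv.symm finProdFinEquiv).trans finProdFinEquiv

lemma getLastD_ofFn {α : Type*} {t : ℕ} (f : Fin (t + 1) → α) (d : α) :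
    (List.ofFn f).getLastD d = f ⟨t, Nat.lt_succ_self t⟩ := by
  rw [List.ofFn_succ']
  simp [List.getLastD_concat, Fin.last]

lemma stepZ_refl (s : ℕ) (p : ℤ × ℤ) : stepZ s p p := by
  constructor <;> simp

lemma stepZ_symm {s : ℕ} {p q : ℤ × ℤ} (h : stepZ s p q) : stepZ s q p := by
  obtain ⟨h1, h2⟩ := h
  exact ⟨by rw [abs_sub_comm]; exact h1, by rw [abs_sub_comm]; exact h2⟩

lemma torusStep_refl (n s : ℕ) (p : ZMod n × ZMod n) : torusStep n s p p :=
  ⟨0, 0, by simp, by simp, by simp, by simp⟩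

lemma torusStep_symm {n s : ℕ} {p q : ZMod n × ZMod n} (h : torusStep n s p q) :
    torusStep n s q p := by
  obtain ⟨a, b, ha, hb, h1, h2⟩ := h
  exact ⟨-a, -b, by simpa using ha, by simpa using hb, by rw [h1]; push_cast; ring,
    by rw [h2]; push_cast; ring⟩

/-- Grid cop position function: index, time, current robber position. -/
def posG (n : ℕ) (j : Bool × (Fin (mcnt n) × Fin (mcnt n))) (t : ℕ) (p : ℤ × ℤ) : ℤ × ℤ :=
  if t % 2 = teamNat j.1 ∧ idxg p.1 = (j.2.1 : ℕ) ∧ idxg p.2 = (j.2.2 : ℕ)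
  then p else (Hg n j.2.1, Hg n j.2.2)

/-- Torus cop position function. -/
def posT (n : ℕ) (j : Bool × (Fin (mcnt n) × Fin (mcnt n))) (t : ℕ) (p : ZMod n × ZMod n) :
    ZMod n × ZMod n :=
  if t % 2 = teamNat j.1 ∧ idxT p.1 = (j.2.1 : ℕ) ∧ idxT p.2 = (j.2.2 : ℕ)
  then p else ((HT n j.2.1 : ZMod n), (HT n j.2.2 : ZMod n))

theorem gridUB (n : ℕ) (hn : 1 ≤ n) : CopsWinGrid n (2 * (mcnt n * mcnt n)) := by
  classical
  set E := gridEquiv n with hE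
  refine ⟨fun i => (Hg n (E.symm i).2.1, Hg n (E.symm i).2.2),
          fun i l => posG n (E.symm i) (l.length - 1) (l.getLastD (1, 1)), ?_, ?_⟩
  · intro i
    exact ⟨Set.mem_Icc.mpr ⟨(Hg_box hn _).1, (Hg_box hn _).2⟩,
           Set.mem_Icc.mpr ⟨(Hg_box hn _).1, (Hg_box hn _).2⟩⟩
  · intro r hbox _hstep c hc
    have hbox' : ∀ t, 1 ≤ (r t).1 ∧ (r t).1 ≤ (n : ℤ) ∧ 1 ≤ (r t).2 ∧ (r t).2 ≤ (n : ℤ) := by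
      intro t
      obtain ⟨h1, h2⟩ := hbox t
      rw [Set.mem_Icc] at h1 h2
      exact ⟨h1.1, h1.2, h2.1, h2.2⟩
    have hcpos : ∀ i t, c i t = posG n (E.symm i) t (r t) := by
      intro i t
      rw [hc i t]
      show posG n (E.symm i) ((List.ofFn fun j : Fin (t+1) => r j).length - 1)
        ((List.ofFn fun j : Fin (t+1) => r j).getLastD (1,1)) = _
      rw [getLastD_ofFn, List.length_ofFn]
      simp
    have hdist : ∀ (j : Bool × (Fin (mcnt n) × Fin (mcnt n))) (t : ℕ),
        idxg (r t).1 = (j.2.1 : ℕ) → idxg (r t).2 = (j.2.2 : ℕ) →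
        stepZ 1 (Hg n j.2.1, Hg n j.2.2) (r t) := by
      intro j t h1 h2
      obtain ⟨hx1, hx2, hy1, hy2⟩ := hbox' t
      obtain ⟨_, d1, d2⟩ := desig_g hn hx1 hx2
      obtain ⟨_, e1, e2⟩ := desig_g hn hy1 hy2
      rw [h1] at d1 d2
      rw [h2] at e1 e2
      constructor <;> · rw [abs_le]; push_cast; omega
    refine ⟨?_, ?_, ?_, ?_⟩
    · intro i
      rw [hcpos i 0]
      unfold posG
      split_ifs with h
      · exact hdist _ 0 h.2.1 h.2.2
      · exact stepZ_refl _ _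
    · intro i t
      rw [hcpos i t, hcpos i (t + 1)]
      unfold posG
      split_ifs with hA hB hB
      · exfalso; have h1 := hA.1; have h2 := hB.1; omega
      · exact stepZ_symm (hdist _ t hA.2.1 hA.2.2)
      · exact hdist _ (t + 1) hB.2.1 hB.2.2
      · exact stepZ_refl _ _
    · intro i t
      rw [hcpos i t]
      unfold posG
      split_ifs with h
      · exact hbox t
      · exact ⟨Set.mem_Icc.mpr ⟨(Hg_box hn _).1, (Hg_box hn _).2⟩,
               Set.mem_Icc.mpr ⟨(Hg_box hn _).1, (Hg_box hn _).2⟩⟩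
    · intro t
      obtain ⟨hx1, hx2, hy1, hy2⟩ := hbox' t
      obtain ⟨ha, _, _⟩ := desig_g hn hx1 hx2
      obtain ⟨hb, _, _⟩ := desig_g hn hy1 hy2
      refine ⟨E ⟨decide (t % 2 = 1), ⟨idxg (r t).1, ha⟩, ⟨idxg (r t).2, hb⟩⟩, ?_⟩
      rw [hcpos]
      unfold posG
      rw [Equiv.symm_apply_apply]
      rw [if_pos ⟨teamNat_mod t, rfl, rfl⟩]

theorem torusUB (n : ℕ) (hn : 1 ≤ n) : CopsWinTorus n (2 * (mcnt n * mcnt n)) := by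
  classical
  haveI : NeZero n := ⟨by omega⟩
  set E := gridEquiv n with hE
  refine ⟨fun i => ((HT n (E.symm i).2.1 : ZMod n), (HT n (E.symm i).2.2 : ZMod n)),
          fun i l => posT n (E.symm i) (l.length - 1) (l.getLastD (0, 0)), ?_⟩
  intro r _hstep c hc
  have hcpos : ∀ i t, c i t = posT n (E.symm i) t (r t) := by
    intro i t
    rw [hc i t]
    show posT n (E.symm i) ((List.ofFn fun j : Fin (t+1) => r j).length - 1)
      ((List.ofFn fun j : Fin (t+1) => r j).getLastD (0,0)) = _
    rw [getLastD_ofFn, List.length_ofFn]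
    simp
  have hval : ∀ p : ZMod n, ((p.val : ℕ) : ZMod n) = p := by
    intro p
    simp [ZMod.natCast_val, ZMod.cast_id]
  have hdist : ∀ (j : Bool × (Fin (mcnt n) × Fin (mcnt n))) (t : ℕ),
      idxT (r t).1 = (j.2.1 : ℕ) → idxT (r t).2 = (j.2.2 : ℕ) →
      torusStep n 1 ((HT n j.2.1 : ZMod n), (HT n j.2.2 : ZMod n)) (r t) := by
    intro j t h1 h2
    have hu1 : (r t).1.val < n := ZMod.val_lt _
    have hu2 : (r t).2.val < n := ZMod.val_lt _
    obtain ⟨_, d1, d2⟩ := desig_T hn hu1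
    obtain ⟨_, e1, e2⟩ := desig_T hn hu2
    unfold idxT at h1 h2
    rw [h1] at d1 d2
    rw [h2] at e1 e2
    refine ⟨((r t).1.val : ℤ) - (HT n j.2.1 : ℤ), ((r t).2.val : ℤ) - (HT n j.2.2 : ℤ),
      ?_, ?_, ?_, ?_⟩
    · rw [abs_le]; push_cast; omega
    · rw [abs_le]; push_cast; omega
    · push_cast
      rw [hval]
      ring
    · push_cast
      rw [hval]
      ring
  refine ⟨?_, ?_, ?_⟩
  · intro i
    rw [hcpos i 0]
    unfold posT
    split_ifs with h
    · exact hdist _ 0 h.2.1 h.2.2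
    · exact torusStep_refl _ _ _
  · intro i t
    rw [hcpos i t, hcpos i (t + 1)]
    unfold posT
    split_ifs with hA hB hB
    · exfalso; have h1 := hA.1; have h2 := hB.1; omega
    · exact torusStep_symm (hdist _ t hA.2.1 hA.2.2)
    · exact hdist _ (t + 1) hB.2.1 hB.2.2
    · exact torusStep_refl _ _ _
  · intro t
    have hu1 : (r t).1.val < n := ZMod.val_lt _
    have hu2 : (r t).2.val < n := ZMod.val_lt _
    obtain ⟨ha, _, _⟩ := desig_T hn hu1
    obtain ⟨hb, _, _⟩ := desig_T hn hu2
    refine ⟨E ⟨decide (t % 2 = 1), ⟨idxT (r t).1, ha⟩, ⟨idxT (r t).2, hb⟩⟩, ?_⟩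
    rw [hcpos]
    unfold posT
    rw [Equiv.symm_apply_apply]
    rw [if_pos ⟨teamNat_mod t, rfl, rfl⟩]

theorem gridLB (n k : ℕ) (hn : 1 ≤ n) (hk : CopsWinGrid n k) : n * n ≤ 9 * k := by
  classical
  obtain ⟨init, strat, hinit, hwin⟩ := hk
  have key : ∀ p : Fin n × Fin n, ∃ i : Fin k,
      stepZ 1 (init i) ((p.1 : ℤ) + 1, (p.2 : ℤ) + 1) := by
    intro p
    have hf1 := p.1.isLt
    have hf2 := p.2.isLt
    have hbox : ∀ _t : ℕ, inBox n ((p.1 : ℤ) + 1, (p.2 : ℤ) + 1) := by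
      intro _t
      constructor <;> rw [Set.mem_Icc] <;> constructor <;> simp <;> omega
    obtain ⟨h0, _, _, hcov⟩ := hwin (fun _ => ((p.1 : ℤ) + 1, (p.2 : ℤ) + 1)) hbox
      (fun t => stepZ_refl 2 _)
      (fun i t => strat i (List.ofFn fun _ : Fin (t + 1) => ((p.1 : ℤ) + 1, (p.2 : ℤ) + 1)))
      (fun i t => rfl)
    obtain ⟨i, hi⟩ := hcov 0
    exact ⟨i, hi ▸ h0 i⟩
  choose I hI using key
  have hFinj : Function.Injective
      (fun p : Fin n × Fin n =>
        (I p, (⟨((p.1 : ℤ) + 1 - (init (I p)).1 + 1).toNat, by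
            have := (hI p).1
            rw [abs_le] at this
            omega⟩ : Fin 3),
         (⟨((p.2 : ℤ) + 1 - (init (I p)).2 + 1).toNat, by
            have := (hI p).2
            rw [abs_le] at this
            omega⟩ : Fin 3))) := by
    intro p q h
    simp only [Prod.mk.injEq, Fin.mk.injEq] at h
    obtain ⟨hIpq, h1, h2⟩ := h
    have b1 := (hI p).1; have b2 := (hI p).2
    have c1 := (hI q).1; have c2 := (hI q).2
    rw [abs_le] at b1 b2 c1 c2
    rw [hIpq] at h1 h2 b1 b2
    have e1 : (p.1 : ℤ) = (q.1 : ℤ) := by omega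
    have e2 : (p.2 : ℤ) = (q.2 : ℤ) := by omega
    have f1 : p.1 = q.1 := Fin.ext (by exact_mod_cast e1)
    have f2 : p.2 = q.2 := Fin.ext (by exact_mod_cast e2)
    exact Prod.ext_iff.mpr ⟨f1, f2⟩
  have hcard := Fintype.card_le_of_injective _ hFinj
  simp [Fintype.card_prod, Fintype.card_fin] at hcard
  omega

theorem torusLB (n k : ℕ) (hn : 1 ≤ n) (hk : CopsWinTorus n k) : n * n ≤ 9 * k := by
  classical
  haveI : NeZero n := ⟨by omega⟩
  obtain ⟨init, strat, hwin⟩ := hk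
  have key : ∀ p : ZMod n × ZMod n, ∃ (i : Fin k) (a b : ℤ),
      |a| ≤ 1 ∧ |b| ≤ 1 ∧ p.1 = (init i).1 + a ∧ p.2 = (init i).2 + b := by
    intro p
    obtain ⟨h0, _, hcov⟩ := hwin (fun _ => p)
      (fun t => torusStep_refl n 2 p)
      (fun i t => strat i (List.ofFn fun _ : Fin (t + 1) => p))
      (fun i t => rfl)
    obtain ⟨i, hi⟩ := hcov 0
    obtain ⟨a, b, ha, hb, h1, h2⟩ := h0 i
    rw [hi] at h1 h2
    exact ⟨i, a, b, by exact_mod_cast ha, by exact_mod_cast hb, h1, h2⟩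
  choose I A B hA hB h1 h2 using key
  have hFinj : Function.Injective
      (fun p : ZMod n × ZMod n =>
        (I p, (⟨(A p + 1).toNat, by have := hA p; rw [abs_le] at this; omega⟩ : Fin 3),
              (⟨(B p + 1).toNat, by have := hB p; rw [abs_le] at this; omega⟩ : Fin 3))) := by
    intro p q h
    simp only [Prod.mk.injEq, Fin.mk.injEq] at h
    obtain ⟨hIpq, hab, hbb⟩ := h
    have a1 := hA p; have a2 := hA q; have b1 := hB p; have b2 := hB q
    rw [abs_le] at a1 a2 b1 b2
    have eA : A p = A q := by omega
    have eB : B p = B q := by omega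
    refine Prod.ext_iff.mpr ⟨?_, ?_⟩
    · rw [h1 p, hIpq, eA, ← h1 q]
    · rw [h2 p, hIpq, eB, ← h2 q]
  have hcard := Fintype.card_le_of_injective _ hFinj
  simp [Fintype.card_prod, Fintype.card_fin, ZMod.card] at hcard
  omega

lemma arith (n k : ℕ) (hn : 1 ≤ n) (h : n * n ≤ 9 * k) :
    2 * (mcnt n * mcnt n) ≤ 4 * k := by
  have hm1 : n ≤ 3 * mcnt n := by unfold mcnt; omega
  have hm2 : 3 * mcnt n ≤ n + 2 := by unfold mcnt; omega
  rcases le_or_gt n 8 with h8 | h8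
  · interval_cases n <;> simp_all [mcnt] <;> omega
  · have hm3 : 3 ≤ mcnt n := by unfold mcnt; omega
    nlinarith [Nat.mul_le_mul hm2 hm2, Nat.mul_le_mul hm1 hm1, Nat.mul_le_mul hm3 hm3,
      Nat.mul_le_mul hm3 (le_refl (mcnt n))]

end Stmt7Aux

/-- With `f(n)`, `g(n)` the minimum numbers of cops needed to win Covering on the
grid `[n]²` and the torus `[n]²` respectively, `(1/4)f(n) ≤ g(n) ≤ 4f(n)`. -/
theorem stmt7 (n : ℕ) (hn : 1 ≤ n) :
    sInf {k | CopsWinGrid n k} ≤ 4 * sInf {k | CopsWinTorus n k} ∧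
    sInf {k | CopsWinTorus n k} ≤ 4 * sInf {k | CopsWinGrid n k} := by
  open Stmt7Aux in
  have hG : CopsWinGrid n (2 * (mcnt n * mcnt n)) := gridUB n hn
  have hT : CopsWinTorus n (2 * (mcnt n * mcnt n)) := torusUB n hn
  constructor
  · have hmem : CopsWinTorus n (sInf {k | CopsWinTorus n k}) :=
      Nat.sInf_mem (⟨_, hT⟩ : {k | CopsWinTorus n k}.Nonempty)
    have hlb := Stmt7Aux.torusLB n _ hn hmem
    calc sInf {k | CopsWinGrid n k} ≤ 2 * (mcnt n * mcnt n) := Nat.sInf_le hG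
      _ ≤ 4 * sInf {k | CopsWinTorus n k} := Stmt7Aux.arith n _ hn hlb
  · have hmem : CopsWinGrid n (sInf {k | CopsWinGrid n k}) :=
      Nat.sInf_mem (⟨_, hG⟩ : {k | CopsWinGrid n k}.Nonempty)
    have hlb := Stmt7Aux.gridLB n _ hn hmem
    calc sInf {k | CopsWinTorus n k} ≤ 2 * (mcnt n * mcnt n) := Nat.sInf_le hT
      _ ≤ 4 * sInf {k | CopsWinGrid n k} := Stmt7Aux.arith n _ hn hlb
end

section
/- Let R: ℤ² → [n]² by reflection: for a point p = (x, y) in [n]², define its four images p, (n+1−x, y), (x, n+1−y), (n+1−x, n+1−y). If p and q are points of [n]² at torus-distance at most 2 (each coordinate differing by at most 2 modulo n), then for each quadrant of [n]² (partition by the lines x = (n+1)/2 and y = (n+1)/2), the image of {p's four reflections} lying in that quadrant and the image of {q's four reflections} lying in that quadrant are at ℓ∞ grid-distance at most 2, assuming n ≥ 5. -/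
/-- The coordinate of the reflection-image of `x ∈ [n]` lying in the chosen half of
`[n]` (lower half if `ε = true`, upper half if `ε = false`), the halves being
determined by the line `x = (n+1)/2`. -/
def halfSel (n : ℕ) (ε : Bool) (x : ℤ) : ℤ :=
  if ε then (if 2 * x ≤ n + 1 then x else n + 1 - x)
  else (if n + 1 ≤ 2 * x then x else n + 1 - x)

/-- Two coordinates are within distance `s` modulo `n`. -/
def torusCoordClose (n : ℕ) (s : ℤ) (x y : ℤ) : Prop := ∃ k : ℤ, |x - y + k * n| ≤ s

lemma halfSel_close (n : ℕ) (hn : 5 ≤ n) (x y : ℤ)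
    (hx : 1 ≤ x ∧ x ≤ n) (hy : 1 ≤ y ∧ y ≤ n)
    (h : torusCoordClose n 2 x y) (ε : Bool) :
    |halfSel n ε x - halfSel n ε y| ≤ 2 := by
  obtain ⟨k, hk⟩ := h
  rw [abs_le] at hk
  have hn' : (5 : ℤ) ≤ n := by exact_mod_cast hn
  have hkb : -1 ≤ k ∧ k ≤ 1 := by
    constructor
    · by_contra hc
      push_neg at hc
      have h2 : k ≤ -2 := by omega
      have : k * n ≤ -2 * n := by nlinarith
      linarith [hk.1, hx.2, hy.1]
    · by_contra hc
      push_neg at hc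
      have h2 : 2 ≤ k := by omega
      have : 2 * (n : ℤ) ≤ k * n := by nlinarith
      linarith [hk.2, hx.1, hy.2]
  obtain ⟨hk1, hk2⟩ := hkb
  interval_cases k <;>
    cases ε <;> simp only [halfSel, if_true, if_false, Bool.false_eq_true] <;>
      split_ifs <;> rw [abs_le] <;> omega

/-- Phantom-robber lemma for the torus: if `p, q ∈ [n]²` are at torus distance at
most 2, then for each of the four quadrants (cut out by the lines `x = (n+1)/2`
and `y = (n+1)/2`), the reflections of `p` and of `q` lying in that quadrant are
at ℓ∞ grid distance at most 2 (for `n ≥ 5`). -/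
theorem stmt8 (n : ℕ) (hn : 5 ≤ n) (p q : ℤ × ℤ)
    (hp : p.1 ∈ Set.Icc (1 : ℤ) n ∧ p.2 ∈ Set.Icc (1 : ℤ) n)
    (hq : q.1 ∈ Set.Icc (1 : ℤ) n ∧ q.2 ∈ Set.Icc (1 : ℤ) n)
    (hclose : torusCoordClose n 2 p.1 q.1 ∧ torusCoordClose n 2 p.2 q.2) :
    ∀ ε₁ ε₂ : Bool,
      |halfSel n ε₁ p.1 - halfSel n ε₁ q.1| ≤ 2 ∧
      |halfSel n ε₂ p.2 - halfSel n ε₂ q.2| ≤ 2 := by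
  intro ε₁ ε₂
  simp only [Set.mem_Icc] at hp hq
  exact ⟨halfSel_close n hn p.1 q.1 hp.1 hq.1 hclose.1 ε₁,
         halfSel_close n hn p.2 q.2 hp.2 hq.2 hclose.2 ε₂⟩
end

section
/- In the one-dimensional fixed-time capture game on ℤ (robber speed 2, cops speed 1, robber starts at the origin, cops choose starting positions knowing T), for T = 4^n the cops can guarantee a cop occupies the robber's position at time exactly T using at most 6·2^{n+1} + 1 cops, placed initially at the points of [−3T, 3T] in arithmetic progression with common difference 2^{n−1}. -/
/-- round-up half: `rhalf z = ⌈z/2⌉`. -/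
def rhalf (z : ℤ) : ℤ := (z + 1) / 2

/-- clamp `x` into `[lo, hi]`. -/
def clampI (x lo hi : ℤ) : ℤ := max lo (min x hi)

/-- The recursive cop strategy.  Level `m` corresponds to total time `4^(m+1)`
and lattice spacing `2^m`. -/
def F : ℕ → ℤ → (ℕ → ℤ) → ℕ → ℤ
  | 0, p, r, t =>
      if t = 0 then p
      else if t ≤ 3 then p + rhalf (r t - r 0)
      else if |p + rhalf (r 3 - r 0) - r 4| ≤ 1 then r 4 else p + rhalf (r 3 - r 0)
  | (m+1), p, r, t =>
      if t ≤ 3 * 4 ^ (m+1) then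
        clampI (p + rhalf (r t - p)) (p - t) (p + t)
      else
        F m (clampI (p + rhalf (r (3 * 4 ^ (m+1)) - p)) (p - 3 * 4 ^ (m+1)) (p + 3 * 4 ^ (m+1)))
          (fun s => r (3 * 4 ^ (m+1) + s)) (t - 3 * 4 ^ (m+1))

lemma F_zero (m : ℕ) (p : ℤ) (r : ℕ → ℤ) : F m p r 0 = p := by
  cases m with
  | zero => simp [F]
  | succ m =>
      have : (0:ℕ) ≤ 3 * 4 ^ (m+1) := Nat.zero_le _
      simp only [F, if_pos this]
      simp only [clampI, rhalf]
      omega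

/-- `F` at time `t` depends only on the robber positions up to time `t`. -/
lemma F_dep : ∀ (m : ℕ) (p : ℤ) (t : ℕ) (r r' : ℕ → ℤ),
    (∀ j, j ≤ t → r j = r' j) → F m p r t = F m p r' t := by
  intro m
  induction m with
  | zero =>
      intro p t r r' h
      simp only [F]
      by_cases h0 : t = 0
      · simp [h0]
      · by_cases h3 : t ≤ 3
        · rw [if_neg h0, if_neg h0, if_pos h3, if_pos h3, h t le_rfl, h 0 (Nat.zero_le _)]
        · rw [if_neg h0, if_neg h0, if_neg h3, if_neg h3,
            h 0 (Nat.zero_le _), h 3 (by omega), h 4 (by omega)]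
  | succ m ih =>
      intro p t r r' h
      simp only [F]
      by_cases ht : t ≤ 3 * 4 ^ (m+1)
      · rw [if_pos ht, if_pos ht, h t le_rfl]
      · rw [if_neg ht, if_neg ht, h (3 * 4 ^ (m+1)) (by omega)]
        exact ih _ _ _ _ (fun j hj => h _ (by omega))

lemma rhalf_step {x y : ℤ} (h : |x - y| ≤ 2) : |rhalf x - rhalf y| ≤ 1 := by
  rw [abs_le] at *
  simp only [rhalf] at *
  omega

lemma clampI_step {x x' lo hi : ℤ} (h : |x' - x| ≤ 1) (hlh : lo ≤ hi) :
    |clampI x' (lo - 1) (hi + 1) - clampI x lo hi| ≤ 1 := by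
  rw [abs_le] at *
  simp only [clampI, max_def, min_def] at *
  split_ifs <;> omega

lemma clampI_step' {x x' lo hi lo' hi' : ℤ} (h : |x' - x| ≤ 1) (hlh : lo ≤ hi)
    (e1 : lo' = lo - 1) (e2 : hi' = hi + 1) :
    |clampI x' lo' hi' - clampI x lo hi| ≤ 1 := by
  subst e1 e2
  exact clampI_step h hlh

/-- The shift identity for `F` at levels `≥ 1` beyond the first phase. -/
lemma F_shift (m : ℕ) (p : ℤ) (r : ℕ → ℤ) (t : ℕ) (ht : 3 * 4 ^ (m+1) ≤ t) :
    F (m+1) p r t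
      = F m (F (m+1) p r (3 * 4 ^ (m+1))) (fun s => r (3 * 4 ^ (m+1) + s))
          (t - 3 * 4 ^ (m+1)) := by
  have hτ : F (m+1) p r (3 * 4 ^ (m+1))
      = clampI (p + rhalf (r (3 * 4 ^ (m+1)) - p)) (p - 3 * 4 ^ (m+1)) (p + 3 * 4 ^ (m+1)) := by
    simp [F]
  rcases eq_or_lt_of_le ht with heq | hlt
  · rw [← heq]
    simp [F_zero]
  · rw [hτ]
    simp only [F, if_neg (by omega : ¬ t ≤ 3 * 4 ^ (m+1))]

/-- Every step of every cop trajectory has speed at most 1. -/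
lemma F_speed : ∀ (m : ℕ) (p : ℤ) (r : ℕ → ℤ),
    (∀ j, |r (j+1) - r j| ≤ 2) → ∀ t, |F m p r (t+1) - F m p r t| ≤ 1 := by
  intro m
  induction m with
  | zero =>
      intro p r hr t
      match t with
      | 0 =>
          have h0 : |r 1 - r 0| ≤ 2 := hr 0
          simp only [F, rhalf, abs_le] at *
          norm_num
          omega
      | 1 =>
          have h1 : |r 2 - r 1| ≤ 2 := hr 1
          simp only [F, rhalf, abs_le] at *
          norm_num
          omega
      | 2 =>
          have h2 : |r 3 - r 2| ≤ 2 := hr 2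
          simp only [F, rhalf, abs_le] at *
          norm_num
          omega
      | 3 =>
          simp only [F]
          norm_num
          split_ifs with hcap
          · rw [abs_le] at *; omega
          · simp
      | (n+4) =>
          simp only [F, if_neg (by omega : ¬ n + 4 + 1 = 0), if_neg (by omega : ¬ n + 4 = 0),
            if_neg (by omega : ¬ n + 4 + 1 ≤ 3), if_neg (by omega : ¬ n + 4 ≤ 3)]
          simp
  | succ m ih =>
      intro p r hr t
      by_cases ht : t + 1 ≤ 3 * 4 ^ (m+1)
      · have ht' : t ≤ 3 * 4 ^ (m+1) := by omega
        simp only [F, if_pos ht, if_pos ht']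
        have hr2 : |(r (t+1) - p) - (r t - p)| ≤ 2 := by
          have := hr t
          rw [abs_le] at *
          omega
        have hmid := rhalf_step hr2
        have key := clampI_step' (x := p + rhalf (r t - p)) (x' := p + rhalf (r (t+1) - p))
          (lo := p - t) (hi := p + t) (lo' := p - (t+1:ℕ)) (hi' := p + (t+1:ℕ))
          (by rw [abs_le] at *; omega) (by omega) (by push_cast; ring) (by push_cast; ring)
        exact key
      · have ht2 : 3 * 4 ^ (m+1) ≤ t := by omega
        rw [F_shift m p r (t+1) (by omega), F_shift m p r t ht2]
        have he : t + 1 - 3 * 4 ^ (m+1) = (t - 3 * 4 ^ (m+1)) + 1 := by omega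
        rw [he]
        exact ih _ _ (fun j => hr (3 * 4 ^ (m+1) + j)) _

lemma r_travel (r : ℕ → ℤ) (hr : ∀ j, |r (j+1) - r j| ≤ 2) :
    ∀ t, |r t - r 0| ≤ 2 * t := by
  intro t
  induction t with
  | zero => simp
  | succ t iht =>
      have := hr t
      rw [abs_le] at *
      push_cast at *
      omega

set_option maxHeartbeats 1000000 in
/-- Capture lemma: some cop on the lattice `a + k·2^m`, within distance
`3·4^{m+1} - 1` of the robber's start, is on the robber at time `4^{m+1}`. -/
lemma F_capture : ∀ (m : ℕ) (a : ℤ) (r : ℕ → ℤ), (∀ j, |r (j+1) - r j| ≤ 2) →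
    ∃ k : ℤ, |a + k * 2 ^ m - r 0| ≤ 3 * 4 ^ (m+1) - 1 ∧
      F m (a + k * 2 ^ m) r (4 ^ (m+1)) = r (4 ^ (m+1)) := by
  intro m
  induction m with
  | zero =>
      intro a r hr
      refine ⟨r 4 - rhalf (r 3 - r 0) - a, ?_, ?_⟩
      · have h0 : |r 1 - r 0| ≤ 2 := hr 0
        have h1 : |r 2 - r 1| ≤ 2 := hr 1
        have h2 : |r 3 - r 2| ≤ 2 := hr 2
        have h3 : |r 4 - r 3| ≤ 2 := hr 3
        rw [abs_le] at *
        simp only [rhalf]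
        norm_num
        omega
      · have hp : a + (r 4 - rhalf (r 3 - r 0) - a) * 2 ^ 0 = r 4 - rhalf (r 3 - r 0) := by ring
        rw [hp]
        show F 0 _ r 4 = r 4
        simp only [F, if_neg (by omega : ¬ (4:ℕ) = 0), if_neg (by omega : ¬ (4:ℕ) ≤ 3)]
        rw [if_pos (by simp)]
  | succ m ih =>
      intro a r hr
      have hr' : ∀ j, |r (3 * 4 ^ (m+1) + (j+1)) - r (3 * 4 ^ (m+1) + j)| ≤ 2 :=
        fun j => hr (3 * 4 ^ (m+1) + j)
      obtain ⟨k, hb, hc⟩ := ih (a + rhalf (r (3 * 4 ^ (m+1)) - a))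
        (fun s => r (3 * 4 ^ (m+1) + s)) hr'
      simp only [Nat.add_zero] at hb
      -- abbreviations purely notational
      have hK2 : k * 2 ^ (m+1) = 2 * (k * 2 ^ m) := by ring
      have hP : (4:ℤ) ^ (m+1+1) = 4 * 4 ^ (m+1) := by ring
      have hPpos : (0:ℤ) < 4 ^ (m+1) := by positivity
      have hmid : a + k * 2 ^ (m+1) + rhalf (r (3 * 4 ^ (m+1)) - (a + k * 2 ^ (m+1)))
          = a + rhalf (r (3 * 4 ^ (m+1)) - a) + k * 2 ^ m := by
        simp only [rhalf]
        omega
      have hτρ := r_travel r hr (3 * 4 ^ (m+1))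
      have hτcast : ((3 * 4 ^ (m+1) : ℕ) : ℤ) = 3 * 4 ^ (m+1) := by push_cast; ring
      rw [abs_le] at hb hτρ
      rw [hτcast] at hτρ
      refine ⟨k, ?_, ?_⟩
      · rw [abs_le]
        simp only [rhalf] at hmid hb ⊢
        constructor <;> omega
      · have hT : 3 * 4 ^ (m+1) ≤ 4 ^ (m+1+1) := by
          have h4 : (4:ℕ) ^ (m+1+1) = 4 * 4 ^ (m+1) := by ring
          omega
        rw [F_shift m _ r (4 ^ (m+1+1)) hT]
        have hFτ : F (m+1) (a + k * 2 ^ (m+1)) r (3 * 4 ^ (m+1))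
            = a + rhalf (r (3 * 4 ^ (m+1)) - a) + k * 2 ^ m := by
          simp only [F, if_pos (le_refl (3 * 4 ^ (m+1)))]
          rw [add_comm (a + k * 2 ^ (m+1)) (rhalf _)] at hmid
          rw [add_comm (rhalf _) (a + k * 2 ^ (m+1))] at hmid
          rw [hmid]
          simp only [clampI, hτcast, max_def, min_def]
          simp only [rhalf] at hmid hb ⊢
          split_ifs <;> omega
        have htime : 4 ^ (m+1+1) - 3 * 4 ^ (m+1) = 4 ^ (m+1) := by
          have h4 : (4:ℕ) ^ (m+1+1) = 4 * 4 ^ (m+1) := by ring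
          omega
        rw [hFτ, htime, hc]
        have h4 : 3 * 4 ^ (m+1) + 4 ^ (m+1) = 4 ^ (m+1+1) := by
          have : (4:ℕ) ^ (m+1+1) = 4 * 4 ^ (m+1) := by ring
          omega
        simp [h4]

/-- Fixed-time capture, 1-D upper bound: for `T = 4^n`, the `6·2^{n+1} + 1` cops
initially placed on `[-3T, 3T]` in arithmetic progression with common difference
`2^{n-1}` have a strategy (a function of the robber history) guaranteeing that
against every speed-2 robber trajectory starting at the origin, all cop moves are
legal (speed 1) and some cop is on the robber at time exactly `T = 4^n`. -/
theorem stmt11 (n : ℕ) (hn : 1 ≤ n) :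
    ∃ strat : Fin (6 * 2 ^ (n + 1) + 1) → List ℤ → ℤ,
      ∀ r : ℕ → ℤ, r 0 = 0 → (∀ j, |r (j + 1) - r j| ≤ 2) →
        ∀ c : Fin (6 * 2 ^ (n + 1) + 1) → ℕ → ℤ,
          (∀ i, c i 0 = -3 * 4 ^ n + (i : ℤ) * 2 ^ (n - 1)) →
          (∀ i t, c i (t + 1) = strat i (List.ofFn fun j : Fin (t + 2) => r j)) →
          (∀ i t, |c i (t + 1) - c i t| ≤ 1) ∧ ∃ i, c i (4 ^ n) = r (4 ^ n) := by
  obtain ⟨m, rfl⟩ : ∃ m, n = m + 1 := ⟨n - 1, (Nat.succ_pred_eq_of_pos hn).symm⟩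
  refine ⟨fun i L => F m (-3 * 4 ^ (m+1) + (i : ℤ) * 2 ^ m) (fun j => L.getD j 0)
    (L.length - 1), ?_⟩
  intro r hr0 hr c hc0 hcrec
  simp only [Nat.add_sub_cancel] at hc0
  have hct : ∀ i t, c i t = F m (-3 * 4 ^ (m+1) + (i : ℤ) * 2 ^ m) r t := by
    intro i t
    induction t with
    | zero => rw [hc0, F_zero]
    | succ t iht =>
        rw [hcrec i t]
        simp only [List.length_ofFn]
        have hlen : t + 2 - 1 = t + 1 := by omega
        rw [hlen]
        apply F_dep
        intro j hj
        have hjlt : j < t + 2 := by omega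
        rw [List.getD_eq_getElem _ _ (by simpa using hj)]
        rw [List.getElem_ofFn]
  constructor
  · intro i t
    rw [hct i (t+1), hct i t]
    exact F_speed m _ r hr t
  · obtain ⟨k, hb, hcap⟩ := F_capture m (-3 * 4 ^ (m+1)) r hr
    rw [hr0, abs_le] at hb
    have h2m : (0:ℤ) < 2 ^ m := by positivity
    have h4e : (4:ℤ) ^ (m+1) = 2 ^ (m+1+1) * 2 ^ m := by
      rw [show (4:ℤ) = 2 ^ 2 from rfl, ← pow_mul, ← pow_add]
      congr 1
      omega
    have hk0 : 0 ≤ k := by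
      by_contra hneg
      push_neg at hneg
      have : k * 2 ^ m ≤ 0 := mul_nonpos_of_nonpos_of_nonneg hneg.le h2m.le
      nlinarith
    have hkle : k ≤ 6 * 2 ^ (m+1+1) := by
      have hmul : k * 2 ^ m ≤ (6 * 2 ^ (m+1+1)) * 2 ^ m := by nlinarith
      exact le_of_mul_le_mul_right hmul h2m
    have hlt : k.toNat < 6 * 2 ^ (m+1+1) + 1 := by
      have h1 : k.toNat ≤ 6 * 2 ^ (m+1+1) := by
        rw [Int.toNat_le]
        push_cast
        exact hkle
      omega
    refine ⟨⟨k.toNat, hlt⟩, ?_⟩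
    rw [hct ⟨k.toNat, hlt⟩ (4 ^ (m+1))]
    have hcast : ((⟨k.toNat, hlt⟩ : Fin (6 * 2 ^ (m+1+1) + 1)) : ℤ) = k := by
      simp [Int.toNat_of_nonneg hk0]
    rw [hcast]
    exact hcap
end

section
/- In the d-dimensional fixed-time capture game on ℤ^d (ℓ∞ metric, robber speed 2, cops speed 1, robber starts at the origin), for T = 4^n − 1 the robber can evade capture at time T against any 2^{d(n−1)} cops; consequently Ω(T^{d/2}) cops are needed to guarantee capture at time exactly T. -/
private lemma steps_abs_bound (c : ℕ → ℤ) (L : ℤ) (h : ∀ t, |c (t + 1) - c t| ≤ L) :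
    ∀ T : ℕ, |c T - c 0| ≤ L * T := by
  intro T
  induction T with
  | zero => simp
  | succ T ih =>
    have h1 := h T
    have h2 : |c (T + 1) - c 0| ≤ |c (T + 1) - c T| + |c T - c 0| := abs_sub_le _ _ _
    push_cast
    linarith

private lemma ofFn_split {α : Type*} (f : ℕ → α) (a b : ℕ) :
    (List.ofFn fun v : Fin (a + b) => f v) =
      (List.ofFn fun v : Fin a => f v) ++ (List.ofFn fun v : Fin b => f (a + v)) := by
  apply List.ext_getElem (by simp)
  intro i h1 h2
  simp only [List.getElem_ofFn]
  rcases lt_or_ge i a with h | h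
  · rw [List.getElem_append_left (by simpa using h)]
    simp
  · rw [List.getElem_append_right (by simpa using h)]
    simp only [List.getElem_ofFn, List.length_ofFn]
    congr 1
    omega

private lemma evade (d : ℕ) (n : ℕ) :
    ∀ (ι : Type) (F : ι → List (Fin d → ℤ) → Fin d → ℤ) (S : Finset ι),
      S.card < 2 ^ (d * n) →
      ∃ r : ℕ → Fin d → ℤ, r 0 = 0 ∧ (∀ t j, |r (t + 1) j - r t j| ≤ 2) ∧
        (∀ t j, |r t j| ≤ 2 * t) ∧
        ∀ i ∈ S,
          (∀ t j, |F i (List.ofFn fun v : Fin (t + 1) => r v) j -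
              F i (List.ofFn fun v : Fin t => r v) j| ≤ 1) →
          F i (List.ofFn fun v : Fin (4 ^ n - 1) => r v) ≠ r (4 ^ n - 1) := by
  induction n with
  | zero =>
    intro ι F S hS
    refine ⟨fun _ => 0, rfl, by simp, by simp, ?_⟩
    intro i hi
    rw [Nat.mul_zero, pow_zero] at hS
    have h0 : S = ∅ := Finset.card_eq_zero.mp (by omega)
    subst h0
    exact absurd hi (Finset.notMem_empty i)
  | succ n ih =>
    intro ι F S hS
    -- choose orthant
    set σ : ι → (Fin d → Bool) := fun i j => decide (0 ≤ F i [] j) with hσ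
    have hb : ∃ b : Fin d → Bool, (S.filter fun i => σ i = b).card < 2 ^ (d * n) := by
      by_contra hall
      push_neg at hall
      have hsum : S.card = ∑ b : Fin d → Bool, (S.filter fun i => σ i = b).card :=
        Finset.card_eq_sum_card_fiberwise (fun i _ => Finset.mem_univ (σ i))
      have h1 : (2 ^ d) * 2 ^ (d * n) ≤ S.card := by
        rw [hsum]
        calc (2 ^ d) * 2 ^ (d * n)
            = ∑ _b : Fin d → Bool, 2 ^ (d * n) := by
              rw [Finset.sum_const, Finset.card_univ]
              have hcard : Fintype.card (Fin d → Bool) = 2 ^ d := by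
                simp
              rw [hcard, smul_eq_mul]
          _ ≤ ∑ b : Fin d → Bool, (S.filter fun i => σ i = b).card :=
              Finset.sum_le_sum fun b _ => hall b
      have : 2 ^ (d * (n + 1)) ≤ S.card := by
        calc 2 ^ (d * (n + 1)) = 2 ^ d * 2 ^ (d * n) := by
              rw [← pow_add]; ring_nf
          _ ≤ S.card := h1
      omega
    obtain ⟨b, hbcard⟩ := hb
    set ε : Fin d → ℤ := fun j => if b j then 1 else -1 with hε
    have hεabs : ∀ j, |ε j| = 1 := by intro j; by_cases h : b j <;> simp [hε, h]
    have hεsq : ∀ j, ε j * ε j = 1 := by intro j; by_cases h : b j <;> simp [hε, h]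
    set s : ℕ := 3 * 4 ^ n with hs
    set T' : ℕ := 4 ^ n - 1 with hT'
    have h4 : 1 ≤ 4 ^ n := Nat.one_le_pow _ _ (by norm_num)
    have hsT : 4 ^ (n + 1) - 1 = s + T' := by
      have : 4 ^ (n + 1) = 4 * 4 ^ n := by ring
      omega
    set shiftF : (Fin d → ℤ) → (Fin d → ℤ) := fun x j => 2 * (s : ℤ) * ε j + x j with hshiftF
    set sprint : List (Fin d → ℤ) := List.ofFn fun v : Fin s => fun j => 2 * (v : ℤ) * ε j
      with hsprint
    obtain ⟨r', hr0, hrstep, hrbnd, hrev⟩ :=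
      ih ι (fun i h j => F i (sprint ++ h.map shiftF) j - 2 * (s : ℤ) * ε j)
        (S.filter fun i => σ i = b) hbcard
    -- the combined robber path
    set R : ℕ → Fin d → ℤ := fun t j => 2 * (↑(min t s) : ℤ) * ε j + r' (t - s) j with hR
    have hr0' : ∀ j, r' 0 j = 0 := fun j => by rw [hr0]; rfl
    have hRval : ∀ t j, s ≤ t → R t j = 2 * (s : ℤ) * ε j + r' (t - s) j := by
      intro t j ht
      simp only [hR, Nat.min_eq_right ht]
    have hRsmall : ∀ t j, t ≤ s → R t j = 2 * (t : ℤ) * ε j := by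
      intro t j ht
      simp only [hR, Nat.min_eq_left ht, Nat.sub_eq_zero_of_le ht, hr0', add_zero]
    -- prefix decomposition
    have hpre : ∀ u : ℕ, (List.ofFn fun v : Fin (s + u) => R ↑v)
        = sprint ++ (List.ofFn fun v : Fin u => r' ↑v).map shiftF := by
      intro u
      rw [ofFn_split R s u]
      congr 1
      · exact congrArg List.ofFn (funext fun v => funext fun j =>
          hRsmall v j (le_of_lt v.2))
      · rw [List.map_ofFn]
        refine congrArg List.ofFn (funext fun v => funext fun j => ?_)
        show R (s + ↑v) j = shiftF (r' ↑v) j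
        rw [hRval (s + ↑v) j (Nat.le_add_right _ _)]
        simp [hshiftF, Nat.add_sub_cancel_left]
    refine ⟨R, ?_, ?_, ?_, ?_⟩
    · funext j
      simp [hR, hr0']
    · -- step bound
      intro t j
      rcases lt_or_ge t s with ht | ht
      · rw [hRsmall t j (le_of_lt ht), hRsmall (t + 1) j ht]
        have : 2 * ((t : ℤ) + 1) * ε j - 2 * (t : ℤ) * ε j = 2 * ε j := by ring
        push_cast
        rw [this, abs_mul, hεabs]
        norm_num
      · rw [hRval t j ht, hRval (t + 1) j (le_trans ht (Nat.le_succ t))]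
        have : t + 1 - s = (t - s) + 1 := by omega
        rw [this]
        have := hrstep (t - s) j
        have h2 : 2 * (s : ℤ) * ε j + r' (t - s + 1) j - (2 * (s : ℤ) * ε j + r' (t - s) j)
            = r' (t - s + 1) j - r' (t - s) j := by ring
        rw [h2]
        exact this
    · -- absolute bound
      intro t j
      have h1 : |2 * (↑(min t s) : ℤ) * ε j| = 2 * (↑(min t s) : ℤ) := by
        rw [abs_mul, hεabs, mul_one, abs_of_nonneg (by positivity)]
      have h2 := hrbnd (t - s) j
      have h3 : |R t j| ≤ |2 * (↑(min t s) : ℤ) * ε j| + |r' (t - s) j| := abs_add_le _ _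
      have h4' : min t s + (t - s) = t := by omega
      rw [h1] at h3
      have h5 : (↑(min t s) : ℤ) + (↑(t - s) : ℤ) = (↑t : ℤ) := by omega
      linarith
    · -- evasion
      intro i hi hlip
      rw [hsT]
      by_cases hsi : σ i = b
      · -- surviving cop: use subgame result
        have hmem : i ∈ S.filter fun i => σ i = b := Finset.mem_filter.mpr ⟨hi, hsi⟩
        have hcon := hrev i hmem
        intro heq
        apply hcon
        · intro t j
          show |F i (sprint ++ (List.ofFn fun v : Fin (t + 1) => r' ↑v).map shiftF) j
              - 2 * (s : ℤ) * ε j -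
              (F i (sprint ++ (List.ofFn fun v : Fin t => r' ↑v).map shiftF) j
              - 2 * (s : ℤ) * ε j)| ≤ 1
          rw [← hpre, ← hpre]
          have := hlip (s + t) j
          have h2 : F i (List.ofFn fun v : Fin (s + (t + 1)) => R ↑v) j - 2 * (s : ℤ) * ε j -
              (F i (List.ofFn fun v : Fin (s + t) => R ↑v) j - 2 * (s : ℤ) * ε j)
              = F i (List.ofFn fun v : Fin (s + (t + 1)) => R ↑v) j -
                F i (List.ofFn fun v : Fin (s + t) => R ↑v) j := by ring
          rw [h2]
          exact this
        · funext j
          show F i (sprint ++ (List.ofFn fun v : Fin T' => r' ↑v).map shiftF) j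
              - 2 * (s : ℤ) * ε j = r' T' j
          rw [← hpre, heq, hRval (s + T') j (Nat.le_add_right _ _), Nat.add_sub_cancel_left]
          ring
      · -- eliminated cop: coordinate argument
        obtain ⟨j, hj⟩ : ∃ j, σ i j ≠ b j := by
          by_contra hc
          push_neg at hc
          exact hsi (funext hc)
        have hinit : ε j * F i [] j ≤ 0 := by
          by_cases hbj : b j = true
          · have h9 : ¬ (0 ≤ F i [] j) := by
              intro hcc
              exact hj (by simp [hσ, hbj, hcc])
            have hε1 : ε j = 1 := by simp [hε, hbj]
            rw [hε1]
            linarith [not_le.mp h9]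
          · have h9 : 0 ≤ F i [] j := by
              by_contra hcc
              exact hj (by simp [hσ, hbj, hcc])
            have hε1 : ε j = -1 := by simp [hε, hbj]
            rw [hε1]
            linarith
        intro heq
        -- cop cannot be far enough
        have hzero : (List.ofFn fun v : Fin 0 => R ↑v) = ([] : List (Fin d → ℤ)) := by simp
        have htele := steps_abs_bound (fun t => F i (List.ofFn fun v : Fin t => R ↑v) j) 1
          (fun t => hlip t j) (s + T')
        simp only [hzero, one_mul] at htele
        -- robber coordinate
        have hRT : R (s + T') j = 2 * (s : ℤ) * ε j + r' T' j := by
          rw [hRval (s + T') j (Nat.le_add_right _ _), Nat.add_sub_cancel_left]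
        have hb1 : |r' T' j| ≤ 2 * (T' : ℤ) := hrbnd T' j
        have habs : |ε j * r' T' j| = |r' T' j| := by rw [abs_mul, hεabs, one_mul]
        have h5 : ε j * R (s + T') j ≥ 2 * (s : ℤ) - 2 * (T' : ℤ) := by
          rw [hRT]
          have h6 : ε j * (2 * (s : ℤ) * ε j + r' T' j)
              = 2 * (s : ℤ) * (ε j * ε j) + ε j * r' T' j := by ring
          rw [h6, hεsq]
          have := neg_abs_le (ε j * r' T' j)
          rw [habs] at this
          linarith
        have hcopj : F i (List.ofFn fun v : Fin (s + T') => R ↑v) j = R (s + T') j := by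
          rw [heq]
        have h7 : ε j * F i (List.ofFn fun v : Fin (s + T') => R ↑v) j
            ≤ (↑(s + T') : ℤ) := by
          have h8 : ε j * (F i (List.ofFn fun v : Fin (s + T') => R ↑v) j - F i [] j)
              ≤ (↑(s + T') : ℤ) := by
            calc ε j * (F i (List.ofFn fun v : Fin (s + T') => R ↑v) j - F i [] j)
                ≤ |ε j * (F i (List.ofFn fun v : Fin (s + T') => R ↑v) j - F i [] j)| :=
                  le_abs_self _
              _ = |F i (List.ofFn fun v : Fin (s + T') => R ↑v) j - F i [] j| := by
                  rw [abs_mul, hεabs, one_mul]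
              _ ≤ (↑(s + T') : ℤ) := htele
          nlinarith [hinit]
        rw [hcopj] at h7
        -- arithmetic contradiction
        have hscast : (s : ℤ) = 3 * 4 ^ n := by push_cast [hs]; ring
        have hT'cast : (T' : ℤ) = 4 ^ n - 1 := by
          rw [hT']; push_cast [h4]; ring
        have h4z : (1 : ℤ) ≤ 4 ^ n := by exact_mod_cast h4
        have hstz : (↑(s + T') : ℤ) = 4 * 4 ^ n - 1 := by
          push_cast [hscast, hT'cast]; ring
        rw [hstz] at h7
        rw [hscast, hT'cast] at h5
        linarith

/-- Fixed-time capture, `d`-dimensional lower bound: for `T = 4^n - 1`, a speed-2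
robber starting at the origin of `ℤ^d` can evade any `2^{d(n-1)}` cops of speed 1
(whatever their initial positions and strategy) at time exactly `T`: there is a
legal robber trajectory such that the induced cop trajectories, if legal, miss
the robber at time `T`. -/
theorem stmt12 (d n : ℕ) (hd : 1 ≤ d) (hn : 1 ≤ n)
    (init : Fin (2 ^ (d * (n - 1))) → Fin d → ℤ)
    (strat : Fin (2 ^ (d * (n - 1))) → List (Fin d → ℤ) → Fin d → ℤ) :
    ∃ r : ℕ → Fin d → ℤ, (r 0 = 0) ∧ (∀ t j, |r (t + 1) j - r t j| ≤ 2) ∧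
      ∀ c : Fin (2 ^ (d * (n - 1))) → ℕ → Fin d → ℤ,
        (∀ i, c i 0 = init i) →
        (∀ i t, c i (t + 1) = strat i (List.ofFn fun j : Fin (t + 1) => r j)) →
        (∀ i t j, |c i (t + 1) j - c i t j| ≤ 1) →
        ∀ i, c i (4 ^ n - 1) ≠ r (4 ^ n - 1) := by
  have hcard : (Finset.univ : Finset (Fin (2 ^ (d * (n - 1))))).card < 2 ^ (d * n) := by
    rw [Finset.card_univ, Fintype.card_fin]
    apply Nat.pow_lt_pow_right one_lt_two
    have h1 : d * (n - 1) + d = d * n := by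
      rw [← Nat.mul_succ]
      congr 1
      omega
    omega
  obtain ⟨r, hr0, hrstep, _, hrev⟩ := evade d n (Fin (2 ^ (d * (n - 1))))
    (fun i h => if h.isEmpty then init i else strat i h) Finset.univ hcard
  refine ⟨r, hr0, hrstep, ?_⟩
  intro c hc0 hcstep hclip i
  have hc : ∀ t, c i t =
      (if (List.ofFn fun v : Fin t => r v).isEmpty then init i
        else strat i (List.ofFn fun v : Fin t => r v)) := by
    intro t
    cases t with
    | zero => simp [hc0]
    | succ t =>
      rw [hcstep i t]
      simp
  have hmain := hrev i (Finset.mem_univ i) ?_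
  · intro heq
    apply hmain
    rw [← hc (4 ^ n - 1)]
    exact heq
  · intro t j
    have := hclip i t j
    rw [hc (t + 1), hc t] at this
    exact this
end

section
/- Fix reals k > 1, t > 1 and integers n, i ≥ 1. Suppose there are at most n^{0.03} cops placed on [n]², and call a grid point p 'banned at level i' if the axis-aligned square of side 2k^i centered at p contains more than (1/4)·t^i cops. Let C_i be the number of banned points at level i. Then C_i < 64·n^{0.03}·k^{2i}/t^i. -/
open scoped Classical

/-- Counting banned points: if at most `n^{0.03}` cops are placed on `[n]²`, and a
grid point `p` is banned at level `i` when the square of side `2k^i` centred at `p`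
contains more than `(1/4)·t^i` cops, then the number `C_i` of banned points
satisfies `C_i < 64·n^{0.03}·k^{2i}/t^i`. -/
theorem stmt17 (k t : ℝ) (hk : 1 < k) (ht : 1 < t) (n i K : ℕ)
    (hn : 1 ≤ n) (hi : 1 ≤ i)
    (cops : Fin K → ℤ × ℤ) (hK : (K : ℝ) ≤ (n : ℝ) ^ (0.03 : ℝ))
    (hcops : ∀ c, (cops c).1 ∈ Set.Icc (1 : ℤ) n ∧ (cops c).2 ∈ Set.Icc (1 : ℤ) n) :
    ((((Finset.Icc (1 : ℤ) n) ×ˢ (Finset.Icc (1 : ℤ) n)).filter fun p =>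
        (1 / 4 : ℝ) * t ^ i <
          ((Finset.univ.filter fun c : Fin K =>
            (|(cops c).1 - p.1| : ℝ) ≤ k ^ i ∧ (|(cops c).2 - p.2| : ℝ) ≤ k ^ i).card : ℝ)).card : ℝ)
      < 64 * (n : ℝ) ^ (0.03 : ℝ) * k ^ (2 * i) / t ^ i := by
  have hk1 : (1:ℝ) ≤ k ^ i := one_le_pow₀ hk.le
  have htpos : (0:ℝ) < t ^ i := pow_pos (by linarith) i
  have hApos : (0:ℝ) < (n:ℝ) ^ (0.03:ℝ) :=
    Real.rpow_pos_of_pos (by exact_mod_cast hn) _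
  set A : ℝ := (n:ℝ) ^ (0.03:ℝ) with hA
  set M : ℤ := ⌊k ^ i⌋ with hMdef
  have hM1 : (1:ℤ) ≤ M := Int.le_floor.2 (by exact_mod_cast hk1)
  have hMle : (M:ℝ) ≤ k ^ i := Int.floor_le _
  set cond : Fin K → ℤ × ℤ → Prop := fun c p =>
    (|(cops c).1 - p.1| : ℝ) ≤ k ^ i ∧ (|(cops c).2 - p.2| : ℝ) ≤ k ^ i with hcond
  set S := (((Finset.Icc (1 : ℤ) n) ×ˢ (Finset.Icc (1 : ℤ) n)).filter fun p =>
        (1 / 4 : ℝ) * t ^ i <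
          ((Finset.univ.filter fun c : Fin K => cond c p).card : ℝ)) with hSdef
  -- step 1
  have h1 : (S.card : ℝ) * ((1/4) * t ^ i) ≤
      ∑ p ∈ S, ((Finset.univ.filter fun c : Fin K => cond c p).card : ℝ) := by
    have := Finset.card_nsmul_le_sum S
      (fun p => ((Finset.univ.filter fun c : Fin K => cond c p).card : ℝ))
      ((1/4) * t ^ i)
      (fun p hp => le_of_lt (Finset.mem_filter.1 hp).2)
    simpa [nsmul_eq_mul] using this
  -- step 2: swap
  have h2 : ∑ p ∈ S, (Finset.univ.filter fun c : Fin K => cond c p).card =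
      ∑ c : Fin K, (S.filter fun p => cond c p).card := by
    simp only [Finset.card_filter]
    exact Finset.sum_comm
  -- step 3: per-cop bound
  have h3 : ∀ c : Fin K, ((S.filter fun p => cond c p).card : ℝ) ≤ (3 * k ^ i) ^ 2 := by
    intro c
    have hsub : S.filter (fun p => cond c p) ⊆
        Finset.Icc ((cops c).1 - M) ((cops c).1 + M) ×ˢ
        Finset.Icc ((cops c).2 - M) ((cops c).2 + M) := by
      intro p hp
      have hc := (Finset.mem_filter.1 hp).2
      have habs1 : |(cops c).1 - p.1| ≤ M := by
        have : ((|(cops c).1 - p.1| : ℤ) : ℝ) ≤ k ^ i := by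
          push_cast
          exact hc.1
        exact Int.le_floor.2 this
      have habs2 : |(cops c).2 - p.2| ≤ M := by
        have : ((|(cops c).2 - p.2| : ℤ) : ℝ) ≤ k ^ i := by
          push_cast
          exact hc.2
        exact Int.le_floor.2 this
      rw [abs_le] at habs1 habs2
      simp only [Finset.mem_product, Finset.mem_Icc]
      omega
    have hcard := Finset.card_le_card hsub
    rw [Finset.card_product, Int.card_Icc, Int.card_Icc] at hcard
    have heq : ((cops c).1 + M + 1 - ((cops c).1 - M)) = 2*M+1 := by ring
    have heq2 : ((cops c).2 + M + 1 - ((cops c).2 - M)) = 2*M+1 := by ring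
    rw [heq, heq2] at hcard
    have htn : (((2*M+1).toNat : ℝ)) = 2*(M:ℝ)+1 := by
      have : ((2*M+1).toNat : ℤ) = 2*M+1 := Int.toNat_of_nonneg (by omega)
      exact_mod_cast congrArg (Int.cast : ℤ → ℝ) this
    calc ((S.filter fun p => cond c p).card : ℝ) ≤ ((2*M+1).toNat : ℝ) * ((2*M+1).toNat : ℝ) := by
          exact_mod_cast hcard
      _ ≤ (3 * k ^ i) * (3 * k ^ i) := by
          rw [htn]
          have h2M : 2*(M:ℝ)+1 ≤ 3 * k ^ i := by linarith
          have hpos : (0:ℝ) ≤ 2*(M:ℝ)+1 := by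
            have : (1:ℝ) ≤ (M:ℝ) := by exact_mod_cast hM1
            linarith
          exact mul_le_mul h2M h2M hpos (by nlinarith)
      _ = (3 * k ^ i) ^ 2 := by ring
  -- combine
  have h4 : (∑ c : Fin K, ((S.filter fun p => cond c p).card : ℝ)) ≤ K * (3 * k ^ i) ^ 2 := by
    calc (∑ c : Fin K, ((S.filter fun p => cond c p).card : ℝ))
        ≤ ∑ _c : Fin K, (3 * k ^ i) ^ 2 := Finset.sum_le_sum (fun c _ => h3 c)
      _ = K * (3 * k ^ i) ^ 2 := by simp [mul_comm]
  have h5 : (S.card : ℝ) * ((1/4) * t ^ i) ≤ A * (9 * (k ^ i) ^ 2) := by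
    have hc : (∑ p ∈ S, ((Finset.univ.filter fun c : Fin K => cond c p).card : ℝ)) =
        ∑ c : Fin K, ((S.filter fun p => cond c p).card : ℝ) := by
      exact_mod_cast congrArg (Nat.cast : ℕ → ℝ) h2
    have hKA : (K:ℝ) * (3 * k ^ i) ^ 2 ≤ A * (9 * (k ^ i) ^ 2) := by
      have hsq : (0:ℝ) ≤ (3 * k ^ i) ^ 2 := sq_nonneg _
      nlinarith
    calc (S.card : ℝ) * ((1/4) * t ^ i) ≤ ∑ c : Fin K, ((S.filter fun p => cond c p).card : ℝ) := by
          rw [← hc]; exact h1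
      _ ≤ K * (3 * k ^ i) ^ 2 := h4
      _ ≤ A * (9 * (k ^ i) ^ 2) := hKA
  rw [lt_div_iff₀ htpos]
  have hk2 : k ^ (2 * i) = (k ^ i) ^ 2 := by rw [mul_comm, pow_mul]
  rw [hk2]
  have hsqpos : (0:ℝ) < (k ^ i) ^ 2 := by positivity
  nlinarith [hApos, hsqpos, mul_pos hApos hsqpos]
end
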